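/- arXiv:0708.4190 — 2 statements merged into one kernel-verified Lean document; each statement's English description precedes it below -/
import Mathlib

section
/- Assume Γ is unitrivalent and j ∈ QCG_k(Γ; j'). Then the map sending λ to exp(π√−1 · Σ_{f ∈ Ex(λ)} j f) is a group homomorphism from the stabilizer subgroup Stab(j) = {λ ∈ Z(Γ) | λ·j = j} to ℂˣ. -/
open scoped BigOperators

set_option linter.unusedSectionVars false
set_option linter.unreachableTactic false
set_option linter.unusedTactic false

variable {V E : Type*} [Fintype V] [Fintype E] [DecidableEq V] [DecidableEq E]

/-- The multiset of edge-ends at a vertex `v`: each edge `e` contributes one end for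
`s e = v` and one end for `t e = v`, so a loop at `v` contributes twice. -/
def endsAt (s t : E → V) (v : V) : Multiset E :=
  (Finset.univ.filter fun e => s e = v).val + (Finset.univ.filter fun e => t e = v).val

/-- The degree of a vertex (a loop counts twice). -/
def degree (s t : E → V) (v : V) : ℕ := Multiset.card (endsAt s t v)

/-- A graph is unitrivalent if every vertex has degree `1` or `3`. -/
def Unitrivalent (s t : E → V) : Prop := ∀ v, degree s t v = 1 ∨ degree s t v = 3

/-- The cycle space `Z(Γ)`: the `ZMod 2`-valued functions on edges whose total value over
the edge-ends at every vertex is `0`.  It plays the role of `H₁(Γ; ℤ/2)`. -/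
def cycleSpace (s t : E → V) : AddSubgroup (E → ZMod 2) where
  carrier := {x | ∀ v, ((endsAt s t v).map x).sum = 0}
  zero_mem' := by intro v; simp
  add_mem' := by
    intro a b ha hb v
    have h : ((endsAt s t v).map (a + b)).sum
        = ((endsAt s t v).map a).sum + ((endsAt s t v).map b).sum := by
      rw [show ((a + b : E → ZMod 2)) = fun e => a e + b e from rfl]
      rw [Multiset.sum_map_add]
    rw [h, ha v, hb v, add_zero]
  neg_mem' := by
    intro a ha v
    have h : (-a : E → ZMod 2) = a := funext fun e => by
      have h2 : ∀ x : ZMod 2, -x = x := by decide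
      exact h2 (a e)
    rw [h]; exact ha v

/-- A weight of level `k`: each edge gets a value in `{0, 1/2, 1, …, k/2}`. -/
def IsWeight (k : ℕ) (j : E → ℚ) : Prop := ∀ f, ∃ m : ℕ, m ≤ k ∧ j f = (m : ℚ) / 2

/-- The set `QCG_k(Γ; j')` of admissible weights of level `k` with boundary values `j'`:
weights agreeing with `j'` on edges with a univalent endpoint and satisfying the quantum
Clebsch–Gordan condition at every trivalent vertex (a loop contributes its weight twice;
the condition `2x ≤ a+b+c` for each of the three end-weights `x` is the triangle
inequality). -/
def QCG (s t : E → V) (k : ℕ) (j' : E → ℚ) : Set (E → ℚ) :=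
  {j | IsWeight k j ∧
    (∀ f, (degree s t (s f) = 1 ∨ degree s t (t f) = 1) → j f = j' f) ∧
    (∀ v, degree s t v = 3 →
      (∃ m : ℤ, ((endsAt s t v).map j).sum = (m : ℚ)) ∧
      (∀ x ∈ (endsAt s t v).map j, 2 * x ≤ ((endsAt s t v).map j).sum) ∧
      ((endsAt s t v).map j).sum ≤ (k : ℚ))}

/-- The action of a cycle `lam` on a weight `j`:
`(lam · j) f = k/2 - j f` if `lam f = 1` and `(lam · j) f = j f` otherwise. -/
def actW (k : ℕ) (lam : E → ZMod 2) (j : E → ℚ) : E → ℚ :=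
  fun f => if lam f = 1 then (k : ℚ) / 2 - j f else j f

theorem actW_zero (k : ℕ) (j : E → ℚ) : actW k (0 : E → ZMod 2) j = j := by
  funext f
  simp [actW]

theorem actW_add (k : ℕ) (l l' : E → ZMod 2) (j : E → ℚ) :
    actW k (l + l') j = actW k l (actW k l' j) := by
  funext f
  have h : ∀ x : ZMod 2, x = 0 ∨ x = 1 := by decide
  simp only [actW, Pi.add_apply]
  rcases h (l f) with h1 | h1 <;> rcases h (l' f) with h2 | h2 <;>
    simp [h1, h2] <;> ring

theorem add_self_zmod2 (l : E → ZMod 2) : l + l = 0 := by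
  funext f
  have h : ∀ x : ZMod 2, x + x = 0 := by decide
  exact h (l f)

/-- A vertex `v` lies on the cycle `lam` if some edge of `lam` has `v` as an endpoint. -/
def LiesOn (s t : E → V) (lam : E → ZMod 2) (v : V) : Prop :=
  ∃ e, lam e = 1 ∧ (s e = v ∨ t e = v)

/-- An edge `f` is `lam`-external if `lam` does not pass through `f` and exactly one of
its endpoints lies on `lam`. -/
def IsExternal (s t : E → V) (lam : E → ZMod 2) (f : E) : Prop :=
  lam f = 0 ∧ Xor' (LiesOn s t lam (s f)) (LiesOn s t lam (t f))

/-- `Ex(lam)`: the finite set of `lam`-external edges. -/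
noncomputable def Ex (s t : E → V) (lam : E → ZMod 2) : Finset E :=
  letI := Classical.decPred (IsExternal s t lam)
  Finset.univ.filter (IsExternal s t lam)

/-- A twisted 1-cocycle `δ : Z(Γ) → (QCG_k(Γ; j') → ℂˣ)` (encoded as a function on all of
`(E → ZMod 2) × (E → ℚ)`, constrained only on `Z(Γ) × QCG_k(Γ; j')`). -/
def IsCocycle (s t : E → V) (k : ℕ) (j' : E → ℚ)
    (δ : (E → ZMod 2) → (E → ℚ) → ℂˣ) : Prop :=
  ∀ lam ∈ cycleSpace s t, ∀ lam' ∈ cycleSpace s t, ∀ j ∈ QCG s t k j',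
    δ (lam + lam') j = δ lam (actW k lam' j) * δ lam' j

/-- A coboundary. -/
def IsCoboundary (s t : E → V) (k : ℕ) (j' : E → ℚ)
    (δ : (E → ZMod 2) → (E → ℚ) → ℂˣ) : Prop :=
  ∃ c : (E → ℚ) → ℂˣ, ∀ lam ∈ cycleSpace s t, ∀ j ∈ QCG s t k j',
    δ lam j = c (actW k lam j) * (c j)⁻¹

/-- The external edge condition. -/
def ExtCond (s t : E → V) (k : ℕ) (j' : E → ℚ)
    (δ : (E → ZMod 2) → (E → ℚ) → ℂˣ) : Prop :=
  ∀ lam ∈ cycleSpace s t, ∀ j ∈ QCG s t k j', actW k lam j = j →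
    (δ lam j : ℂ) =
      Complex.exp (Real.pi * Complex.I * ((∑ f ∈ Ex s t lam, j f : ℚ) : ℂ))

/-- The stabilizer `Stab(j) = {lam ∈ Z(Γ) | lam · j = j}`, as a subgroup of the group of
`ZMod 2`-valued functions on edges. -/
def stab (s t : E → V) (k : ℕ) (j : E → ℚ) : AddSubgroup (E → ZMod 2) where
  carrier := {lam | lam ∈ cycleSpace s t ∧ actW k lam j = j}
  zero_mem' := ⟨(cycleSpace s t).zero_mem, actW_zero k j⟩
  add_mem' := by
    rintro a b ⟨ha1, ha2⟩ ⟨hb1, hb2⟩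
    exact ⟨add_mem ha1 hb1, by rw [actW_add, hb2, ha2]⟩
  neg_mem' := by
    rintro a ⟨ha1, ha2⟩
    have h : (-a : E → ZMod 2) = a := funext fun e => by
      have h2 : ∀ x : ZMod 2, -x = x := by decide
      exact h2 (a e)
    rw [h]
    exact ⟨ha1, ha2⟩

/-!
For `λ ∈ Stab(j)` every edge of `λ` has weight `k/4`. A vertex `v` on `λ` is trivalent with two
`λ`-ends, so the third end has weight `σ(v) - k/2`, where `σ(v)` is the total weight at `v`, and
this is an integer. Summing over the vertices of `λ` counts each external edge once and each other
edge off `λ` with an endpoint on `λ` twice, so `Σ_{Ex(λ)} j ≡ Σ_{v on λ} (σ(v) - k/2)` modulo `2`.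
The right side is additive in `λ` up to `Σ_v ν(v) (σ(v) - k/2)`, where `ν(v)` counts the common
ends of `λ` and `λ'` at `v`. Vertices with `ν(v) = 2` contribute even integers; at a vertex with
`ν(v) = 1` all three ends lie on `λ` or `λ'`, so `σ(v) - k/2 = k/4` is an integer, and there are
evenly many such vertices since `Σ_v ν(v)` is twice the number of common edges. Hence
`λ ↦ Σ_{Ex(λ)} j` is additive modulo `2`.
-/

open Finset AddSubgroup

theorem zmod_two_eq_zero_or_eq_one (x : ZMod 2) : x = 0 ∨ x = 1 := by
  revert x; decide

section CycleDegrees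

variable {s t : E → V}

theorem mem_endsAt {v : V} {e : E} : e ∈ endsAt s t v ↔ s e = v ∨ t e = v := by
  simp [endsAt]

theorem sum_sum_map_endsAt {M : Type*} [AddCommMonoid M] (F : V → E → M) :
    ∑ v, ((endsAt s t v).map (F v)).sum = ∑ e, (F (s e) e + F (t e) e) := by
  simp only [endsAt, Multiset.map_add, Multiset.sum_add, Finset.sum_map_val,
    Finset.sum_add_distrib, Finset.sum_filter]
  rw [Finset.sum_comm, Finset.sum_comm (f := fun v e => if t e = v then F v e else 0)]
  simp

variable (s t) in
def cycleDegree (l : E → ZMod 2) (v : V) : ℕ :=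
  ((endsAt s t v).map fun e => (l e).val).sum

variable (s t) in
def commonDegree (l l' : E → ZMod 2) (v : V) : ℕ :=
  ((endsAt s t v).map fun e => (l e).val * (l' e).val).sum

variable {l l' : E → ZMod 2} {v : V}

theorem cycleDegree_le_degree : cycleDegree s t l v ≤ degree s t v := by
  simpa [cycleDegree, degree] using Multiset.sum_map_le_sum_map _ (fun _ => 1)
    fun e _ => Nat.le_of_lt_succ (ZMod.val_lt (l e))

theorem even_cycleDegree (hl : l ∈ cycleSpace s t) (v : V) : Even (cycleDegree s t l v) := by
  rw [← ZMod.natCast_eq_zero_iff_even, cycleDegree, Nat.cast_multiset_sum, Multiset.map_map]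
  simpa [Function.comp_def] using hl v

theorem cycleDegree_eq_zero_or_eq_two (hut : Unitrivalent s t) (hl : l ∈ cycleSpace s t) (v : V) :
    cycleDegree s t l v = 0 ∨ cycleDegree s t l v = 2 ∧ degree s t v = 3 := by
  obtain ⟨m, hm⟩ := even_cycleDegree hl v
  have : cycleDegree s t l v ≤ degree s t v := cycleDegree_le_degree
  rcases hut v with h | h <;> omega

theorem liesOn_iff_cycleDegree_ne_zero : LiesOn s t l v ↔ cycleDegree s t l v ≠ 0 := by
  simp only [LiesOn, cycleDegree, ne_eq, Multiset.sum_eq_zero_iff, Multiset.mem_map,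
    forall_exists_index, and_imp, forall_apply_eq_imp_iff₂, ZMod.val_eq_zero, not_forall,
    mem_endsAt]
  refine exists_congr fun e => ?_
  rcases zmod_two_eq_zero_or_eq_one (l e) with h | h <;> simp [h, and_comm]

instance (l : E → ZMod 2) : DecidablePred (LiesOn s t l) :=
  fun _ => inferInstanceAs (Decidable (∃ _, _))

theorem exists_endsAt_eq_of_liesOn (hut : Unitrivalent s t) (hl : l ∈ cycleSpace s t)
    (hv : LiesOn s t l v) :
    ∃ e a b, endsAt s t v = {e, a, b} ∧ l e = 0 ∧ l a = 1 ∧ l b = 1 := by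
  obtain ⟨hcd, hdeg⟩ := (cycleDegree_eq_zero_or_eq_two hut hl v).resolve_left
    (liesOn_iff_cycleDegree_ne_zero.1 hv)
  obtain ⟨x, y, z, hxyz⟩ := Multiset.card_eq_three.1 hdeg
  rw [cycleDegree, hxyz] at hcd
  rw [hxyz]
  rcases zmod_two_eq_zero_or_eq_one (l x) with hx | hx <;>
  rcases zmod_two_eq_zero_or_eq_one (l y) with hy | hy <;>
  rcases zmod_two_eq_zero_or_eq_one (l z) with hz | hz <;>
  simp [hx, hy, hz, ZMod.val_one] at hcd
  · exact ⟨x, y, z, rfl, hx, hy, hz⟩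
  · exact ⟨y, x, z, Multiset.cons_swap _ _ _, hy, hx, hz⟩
  · refine ⟨z, x, y, ?_, hz, hx, hy⟩
    show x ::ₘ y ::ₘ {z} = z ::ₘ x ::ₘ {y}
    rw [Multiset.cons_swap z x]
    exact congrArg (x ::ₘ ·) (Multiset.pair_comm y z)

theorem cycleDegree_add_add_two_mul_commonDegree (l l' : E → ZMod 2) (v : V) :
    cycleDegree s t (l + l') v + 2 * commonDegree s t l l' v
      = cycleDegree s t l v + cycleDegree s t l' v := by
  have key : ∀ a b : ZMod 2, (a + b).val + 2 * (a.val * b.val) = a.val + b.val := by decide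
  simp only [cycleDegree, commonDegree, ← Multiset.sum_map_mul_left, ← Multiset.sum_map_add]
  exact congrArg Multiset.sum (Multiset.map_congr rfl fun e _ => key (l e) (l' e))

theorem commonDegree_le_cycleDegree : commonDegree s t l l' v ≤ cycleDegree s t l v :=
  Multiset.sum_map_le_sum_map _ _ fun e _ =>
    mul_le_of_le_one_right' (Nat.le_of_lt_succ (ZMod.val_lt (l' e)))

theorem sum_commonDegree (l l' : E → ZMod 2) :
    ∑ v, commonDegree s t l l' v = 2 * ∑ e, (l e).val * (l' e).val := by
  simp only [commonDegree, sum_sum_map_endsAt, ← two_mul, mul_sum]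

theorem even_card_odd_commonDegree (l l' : E → ZMod 2) :
    Even #{v | Odd (commonDegree s t l l' v)} := by
  rw [← Finset.even_sum_iff_even_card_odd, sum_commonDegree]
  exact even_two_mul _

end CycleDegrees

section Weights

variable {s t : E → V} {k : ℕ} {j j' : E → ℚ} {l l' : E → ZMod 2} {v : V}

variable (s t k j) in
def excess (v : V) : ℚ := ((endsAt s t v).map j).sum - k / 2

variable (s t k j) in
/-- On a cycle `l` of a unitrivalent graph this is `Σ_{v on l} excess v`
(`cycleDegree_div_two_eq_ite`); the factor `cycleDegree / 2` makes `excessSum_add` exact. -/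
def excessSum (l : E → ZMod 2) : ℚ := ∑ v, (cycleDegree s t l v / 2 : ℚ) * excess s t k j v

theorem apply_eq_of_actW_eq_self (hfix : actW k l j = j) {e : E} (he : l e = 1) :
    j e = k / 4 := by
  have := congrFun hfix e
  simp only [actW, if_pos he] at this
  linarith

theorem excess_eq_of_endsAt_eq (hfix : actW k l j = j) {e a b : E}
    (hv : endsAt s t v = {e, a, b}) (ha : l a = 1) (hb : l b = 1) : excess s t k j v = j e := by
  simp only [excess, hv, Multiset.insert_eq_cons, Multiset.map_cons, Multiset.sum_cons,
    Multiset.map_singleton, Multiset.sum_singleton,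
    apply_eq_of_actW_eq_self hfix ha, apply_eq_of_actW_eq_self hfix hb]
  ring

theorem apply_eq_excess (hut : Unitrivalent s t) (hl : l ∈ cycleSpace s t)
    (hfix : actW k l j = j) (hv : LiesOn s t l v) {e : E} (hev : e ∈ endsAt s t v)
    (he : l e = 0) : j e = excess s t k j v := by
  obtain ⟨e', a, b, hends, he', ha, hb⟩ := exists_endsAt_eq_of_liesOn hut hl hv
  rw [excess_eq_of_endsAt_eq hfix hends ha hb]
  simp only [hends, Multiset.insert_eq_cons, Multiset.mem_cons, Multiset.mem_singleton] at hev
  rcases hev with rfl | rfl | rfl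
  · rfl
  all_goals simp_all

theorem exists_int_excess (hj : j ∈ QCG s t k j') (hut : Unitrivalent s t)
    (hl : l ∈ cycleSpace s t) (hfix : actW k l j = j) (hv : LiesOn s t l v) :
    ∃ n : ℤ, excess s t k j v = n := by
  obtain ⟨-, hdeg⟩ := (cycleDegree_eq_zero_or_eq_two hut hl v).resolve_left
    (liesOn_iff_cycleDegree_ne_zero.1 hv)
  obtain ⟨m, hm⟩ := (hj.2.2 v hdeg).1
  obtain ⟨e, he, -⟩ := hv
  obtain ⟨n, -, hn⟩ := hj.1 e
  have := apply_eq_of_actW_eq_self hfix he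
  exact ⟨m - n, by rw [excess, hm]; push_cast; linarith⟩

theorem cycleDegree_div_two_eq_ite (hut : Unitrivalent s t) (hl : l ∈ cycleSpace s t) (v : V) :
    (cycleDegree s t l v / 2 : ℚ) = if LiesOn s t l v then 1 else 0 := by
  rcases cycleDegree_eq_zero_or_eq_two hut hl v with h | ⟨h, -⟩ <;>
    simp [liesOn_iff_cycleDegree_ne_zero, h]

theorem excessSum_eq_sum_edges (hut : Unitrivalent s t) (hl : l ∈ cycleSpace s t)
    (hfix : actW k l j = j) :
    excessSum s t k j l = ∑ e, (cycleDegree s t l (s e) / 2 + cycleDegree s t l (t e) / 2 : ℚ)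
      * if l e = 0 then j e else 0 := by
  have hvertex : ∀ v, (cycleDegree s t l v / 2 : ℚ) * excess s t k j v
      = ((endsAt s t v).map fun e =>
          (cycleDegree s t l v / 2 : ℚ) * if l e = 0 then j e else 0).sum := by
    intro v
    rw [Multiset.sum_map_mul_left, cycleDegree_div_two_eq_ite hut hl]
    split_ifs with hv
    · obtain ⟨e, a, b, hends, he, ha, hb⟩ := exists_endsAt_eq_of_liesOn hut hl hv
      simp [excess_eq_of_endsAt_eq hfix hends ha hb, hends, he, ha, hb]
    · simp
  simp only [excessSum, hvertex, sum_sum_map_endsAt, add_mul]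

theorem isExternal_iff {f : E} : IsExternal s t l f ↔ l f = 0 ∧
    (LiesOn s t l (s f) ∧ ¬LiesOn s t l (t f) ∨ LiesOn s t l (t f) ∧ ¬LiesOn s t l (s f)) :=
  Iff.rfl

theorem sum_Ex_sub_excessSum_mem (hj : j ∈ QCG s t k j') (hut : Unitrivalent s t)
    (hl : l ∈ cycleSpace s t) (hfix : actW k l j = j) :
    ∑ f ∈ Ex s t l, j f - excessSum s t k j l ∈ zmultiples (2 : ℚ) := by
  classical
  rw [excessSum_eq_sum_edges hut hl hfix, Ex, sum_filter, ← sum_sub_distrib]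
  refine sum_mem fun e _ => ?_
  simp only [cycleDegree_div_two_eq_ite hut hl, isExternal_iff]
  rcases zmod_two_eq_zero_or_eq_one (l e) with he | he
  · by_cases hs : LiesOn s t l (s e) <;> by_cases ht : LiesOn s t l (t e)
    · obtain ⟨n, hn⟩ := exists_int_excess hj hut hl hfix hs
      have := apply_eq_excess hut hl hfix hs (mem_endsAt.2 (Or.inl rfl)) he
      simp [he, hs, ht, this, hn, ← two_mul, mul_comm]
    all_goals simp [he, hs, ht]
  · simp [he]

theorem excessSum_add (l l' : E → ZMod 2) :
    excessSum s t k j (l + l') = excessSum s t k j l + excessSum s t k j l'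
      - ∑ v, (commonDegree s t l l' v : ℚ) * excess s t k j v := by
  simp only [excessSum, ← sum_add_distrib, ← sum_sub_distrib]
  refine sum_congr rfl fun v _ => ?_
  have h := congrArg (Nat.cast : ℕ → ℚ)
    (cycleDegree_add_add_two_mul_commonDegree (s := s) (t := t) l l' v)
  push_cast at h
  linear_combination (excess s t k j v / 2) * h

theorem liesOn_of_commonDegree_ne_zero (hv : commonDegree s t l l' v ≠ 0) : LiesOn s t l v :=
  liesOn_iff_cycleDegree_ne_zero.2 fun h => hv (Nat.le_zero.1 (h ▸ commonDegree_le_cycleDegree))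

theorem excess_eq_of_odd_commonDegree (hut : Unitrivalent s t) (hl : l ∈ cycleSpace s t)
    (hl' : l' ∈ cycleSpace s t) (hfix : actW k l j = j) (hfix' : actW k l' j = j)
    (hv : Odd (commonDegree s t l l' v)) : excess s t k j v = k / 4 := by
  obtain ⟨e, a, b, hends, he, ha, hb⟩ := exists_endsAt_eq_of_liesOn hut hl
    (liesOn_of_commonDegree_ne_zero hv.pos.ne')
  rw [excess_eq_of_endsAt_eq hfix hends ha hb]
  refine apply_eq_of_actW_eq_self hfix' ?_
  have heven := even_cycleDegree hl' v
  rw [commonDegree, hends] at hv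
  rw [cycleDegree, hends] at heven
  rcases zmod_two_eq_zero_or_eq_one (l' e) with h | h <;>
  rcases zmod_two_eq_zero_or_eq_one (l' a) with h' | h' <;>
  rcases zmod_two_eq_zero_or_eq_one (l' b) with h'' | h'' <;>
  simp [he, ha, hb, h, h', h'', ZMod.val_one, Nat.odd_iff] at hv heven ⊢

theorem commonDegree_mul_excess_sub_mem (hj : j ∈ QCG s t k j') (hut : Unitrivalent s t)
    (hl : l ∈ cycleSpace s t) (hfix : actW k l j = j) (l' : E → ZMod 2) (v : V) :
    (commonDegree s t l l' v : ℚ) * excess s t k j v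
      - (if Odd (commonDegree s t l l' v) then excess s t k j v else 0)
      ∈ zmultiples (2 : ℚ) := by
  have hle : commonDegree s t l l' v ≤ cycleDegree s t l v := commonDegree_le_cycleDegree
  have hcd := cycleDegree_eq_zero_or_eq_two hut hl v
  obtain h | h | h : commonDegree s t l l' v = 0 ∨ commonDegree s t l l' v = 1 ∨
      commonDegree s t l l' v = 2 := by omega
  · simp [h]
  · simp [h]
  · obtain ⟨n, hn⟩ := exists_int_excess hj hut hl hfix
      (liesOn_of_commonDegree_ne_zero (l' := l') (v := v) (by omega))
    simp [h, hn, Nat.odd_iff, mul_comm]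

theorem sum_excess_odd_commonDegree_mem (hj : j ∈ QCG s t k j') (hut : Unitrivalent s t)
    (hl : l ∈ cycleSpace s t) (hl' : l' ∈ cycleSpace s t) (hfix : actW k l j = j)
    (hfix' : actW k l' j = j) :
    ∑ v with Odd (commonDegree s t l l' v), excess s t k j v ∈ zmultiples (2 : ℚ) := by
  rcases Finset.eq_empty_or_nonempty {v | Odd (commonDegree s t l l' v)} with hO | ⟨v₀, hv₀⟩
  · simp [hO]
  have hodd {v} (hv : v ∈ ({v | Odd (commonDegree s t l l' v)} : Finset V)) :
      excess s t k j v = k / 4 :=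
    excess_eq_of_odd_commonDegree hut hl hl' hfix hfix' (mem_filter.1 hv).2
  obtain ⟨n, hn⟩ := exists_int_excess hj hut hl hfix
    (liesOn_of_commonDegree_ne_zero (mem_filter.1 hv₀).2.pos.ne')
  obtain ⟨m, hm⟩ := even_card_odd_commonDegree (s := s) (t := t) l l'
  rw [sum_congr rfl fun v hv => hodd hv, sum_const, hm, ← hodd hv₀, hn]
  exact mem_zmultiples_iff.2 ⟨m * n, by rw [zsmul_eq_mul, nsmul_eq_mul]; push_cast; ring⟩

theorem sum_commonDegree_mul_excess_mem (hj : j ∈ QCG s t k j') (hut : Unitrivalent s t)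
    (hl : l ∈ cycleSpace s t) (hl' : l' ∈ cycleSpace s t) (hfix : actW k l j = j)
    (hfix' : actW k l' j = j) :
    ∑ v, (commonDegree s t l l' v : ℚ) * excess s t k j v ∈ zmultiples (2 : ℚ) := by
  have hsplit : ∑ v, (commonDegree s t l l' v : ℚ) * excess s t k j v
      = ∑ v, ((commonDegree s t l l' v : ℚ) * excess s t k j v
          - if Odd (commonDegree s t l l' v) then excess s t k j v else 0)
        + ∑ v with Odd (commonDegree s t l l' v), excess s t k j v := by
    rw [sum_filter, ← sum_add_distrib]
    simp
  rw [hsplit]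
  exact add_mem (sum_mem fun v _ => commonDegree_mul_excess_sub_mem hj hut hl hfix l' v)
    (sum_excess_odd_commonDegree_mem hj hut hl hl' hfix hfix')

theorem sum_Ex_add_sub_mem (hj : j ∈ QCG s t k j') (hut : Unitrivalent s t)
    (hl : l ∈ stab s t k j) (hl' : l' ∈ stab s t k j) :
    ∑ f ∈ Ex s t (l + l'), j f - ∑ f ∈ Ex s t l, j f - ∑ f ∈ Ex s t l', j f
      ∈ zmultiples (2 : ℚ) := by
  have hsum := add_mem hl hl'
  have h := sub_mem (sub_mem (sum_Ex_sub_excessSum_mem hj hut hsum.1 hsum.2)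
    (sum_Ex_sub_excessSum_mem hj hut hl.1 hl.2)) (sum_Ex_sub_excessSum_mem hj hut hl'.1 hl'.2)
  rw [excessSum_add] at h
  convert sub_mem h (sum_commonDegree_mul_excess_mem hj hut hl.1 hl'.1 hl.2 hl'.2) using 1
  ring

end Weights

theorem exp_pi_mul_I_eq_mul_of_sub_mem {x y z : ℚ} (h : x - y - z ∈ zmultiples (2 : ℚ)) :
    Complex.exp (Real.pi * Complex.I * (x : ℂ)) =
      Complex.exp (Real.pi * Complex.I * (y : ℂ)) *
        Complex.exp (Real.pi * Complex.I * (z : ℂ)) := by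
  obtain ⟨n, hn⟩ := mem_zmultiples_iff.1 h
  rw [← Complex.exp_add, Complex.exp_eq_exp_iff_exists_int]
  refine ⟨n, ?_⟩
  rw [show x = y + z + n * 2 by rw [← zsmul_eq_mul, hn]; ring]
  push_cast
  ring

theorem external_sum_exp_is_hom_general
    (s t : E → V) (k : ℕ) (j' : E → ℚ)
    (hut : Unitrivalent s t)
    (j : E → ℚ) (hj : j ∈ QCG s t k j') :
    ∃ φ : Multiplicative ↥(stab s t k j) →* ℂˣ,
      ∀ lam : ↥(stab s t k j),
        ((φ (Multiplicative.ofAdd lam) : ℂˣ) : ℂ) =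
          Complex.exp (Real.pi * Complex.I *
            ((∑ f ∈ Ex s t ((lam : E → ZMod 2)), j f : ℚ) : ℂ)) := by
  refine ⟨MonoidHom.mk' (fun lam => Units.mk0 (Complex.exp (Real.pi * Complex.I *
      ((∑ f ∈ Ex s t (lam.toAdd : E → ZMod 2), j f : ℚ) : ℂ))) (Complex.exp_ne_zero _))
    fun a b => Units.ext ?_, fun _ => rfl⟩
  exact exp_pi_mul_I_eq_mul_of_sub_mem (sum_Ex_add_sub_mem hj hut a.toAdd.2 b.toAdd.2)

/-- for `j ∈ QCG_k(Γ; j')`, the map sending `lam` to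
`exp(π√-1 · Σ_{f ∈ Ex(lam)} j f)` is a group homomorphism from the stabilizer
`Stab(j) = {lam ∈ Z(Γ) | lam · j = j}` to `ℂˣ`. -/
theorem external_sum_exp_is_hom
    (s t : E → V) (k : ℕ) (j' : E → ℚ)
    (hut : Unitrivalent s t) (hk : 0 < k)
    (j : E → ℚ) (hj : j ∈ QCG s t k j') :
    ∃ φ : Multiplicative ↥(stab s t k j) →* ℂˣ,
      ∀ lam : ↥(stab s t k j),
        ((φ (Multiplicative.ofAdd lam) : ℂˣ) : ℂ) =
          Complex.exp (Real.pi * Complex.I *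
            ((∑ f ∈ Ex s t ((lam : E → ZMod 2)), j f : ℚ) : ℂ)) :=
  external_sum_exp_is_hom_general s t k j' hut j hj
end

section
/- Assume Γ is unitrivalent. If δ₁ and δ₂ are two external edge cocycles (for the same Γ, k and j'), then the pointwise quotient δ₁ · δ₂⁻¹ is a coboundary; that is, the external edge class is unique. -/
open scoped BigOperators

set_option linter.unusedSectionVars false
set_option linter.unreachableTactic false
set_option linter.unusedTactic false

variable {V E : Type*} [Fintype V] [Fintype E] [DecidableEq V] [DecidableEq E]

lemma lam_zero_univalent (s t : E → V) (lam : E → ZMod 2)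
    (hlam : lam ∈ cycleSpace s t) (f : E)
    (h : degree s t (s f) = 1 ∨ degree s t (t f) = 1) : lam f = 0 := by
  have key : ∀ v, degree s t v = 1 → f ∈ endsAt s t v → lam f = 0 := by
    intro v hv hf
    have hcard : Multiset.card (endsAt s t v) = 1 := hv
    obtain ⟨a, ha⟩ := Multiset.card_eq_one.mp hcard
    rw [ha, Multiset.mem_singleton] at hf
    have := hlam v
    rw [ha, Multiset.map_singleton, Multiset.sum_singleton] at this
    rw [hf]; exact this
  rcases h with h | h
  · exact key _ h (by simp [endsAt, Multiset.mem_add])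
  · exact key _ h (by simp [endsAt, Multiset.mem_add])

lemma actW_mem_QCG (s t : E → V) (k : ℕ) (j' : E → ℚ) (lam : E → ZMod 2)
    (hlam : lam ∈ cycleSpace s t) (j : E → ℚ) (hj : j ∈ QCG s t k j') :
    actW k lam j ∈ QCG s t k j' := by
  obtain ⟨hw, hb, ht3⟩ := hj
  refine ⟨?_, ?_, ?_⟩
  · intro f
    obtain ⟨m, hm, hjf⟩ := hw f
    by_cases hf : lam f = 1
    · refine ⟨k - m, by omega, ?_⟩
      simp only [actW, hf, if_true, hjf]
      rw [Nat.cast_sub hm]; ring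
    · exact ⟨m, hm, by simp only [actW, hf, if_false]; exact hjf⟩
  · intro f hf
    have h0 := lam_zero_univalent s t lam hlam f hf
    have : lam f ≠ 1 := by rw [h0]; decide
    simp only [actW, this, if_false]
    exact hb f hf
  · intro v hv
    obtain ⟨⟨m, hm⟩, htri, hle⟩ := ht3 v hv
    have hcard : Multiset.card (endsAt s t v) = 3 := hv
    obtain ⟨a, b, c, habc⟩ := Multiset.card_eq_three.mp hcard
    have hl := hlam v
    obtain ⟨ma, hma, hja⟩ := hw a
    obtain ⟨mb, hmb, hjb⟩ := hw b
    obtain ⟨mc, hmc, hjc⟩ := hw c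
    rw [habc] at htri
    have hta := htri (j a) (by simp)
    have htb := htri (j b) (by simp)
    have htc := htri (j c) (by simp)
    rw [habc] at hl hm hle ⊢
    simp only [Multiset.insert_eq_cons, Multiset.map_cons, Multiset.sum_cons,
      Multiset.map_singleton, Multiset.sum_singleton, Multiset.mem_cons,
      Multiset.mem_singleton] at hl hm hle hta htb htc ⊢
    have h2 : ∀ x : ZMod 2, x = 0 ∨ x = 1 := by decide
    have hne : ((0 : ZMod 2) = 1) = False := by simp
    rcases h2 (lam a) with ha | ha <;> rcases h2 (lam b) with hb' | hb' <;>
      rcases h2 (lam c) with hc' | hc' <;>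
      rw [ha, hb', hc'] at hl <;>
      simp only [actW, ha, hb', hc', if_true, hne, if_false] <;>
      [skip; exact absurd hl (by decide); exact absurd hl (by decide); skip;
       exact absurd hl (by decide); skip; skip; exact absurd hl (by decide)]
    · exact ⟨⟨m, hm⟩, by rintro x (rfl | rfl | rfl) <;> linarith, hle⟩
    · refine ⟨⟨k + m - mb - mc, ?_⟩, ?_, ?_⟩
      · push_cast; rw [hjb, hjc] at hm ⊢; linarith
      · rintro x (rfl | rfl | rfl) <;> linarith
      · linarith
    · refine ⟨⟨k + m - ma - mc, ?_⟩, ?_, ?_⟩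
      · push_cast; rw [hja, hjc] at hm ⊢; linarith
      · rintro x (rfl | rfl | rfl) <;> linarith
      · linarith
    · refine ⟨⟨k + m - ma - mb, ?_⟩, ?_, ?_⟩
      · push_cast; rw [hja, hjb] at hm ⊢; linarith
      · rintro x (rfl | rfl | rfl) <;> linarith
      · linarith

/-- The orbit equivalence relation of the `cycleSpace` action on weights. -/
def orbSetoid (s t : E → V) (k : ℕ) : Setoid (E → ℚ) where
  r j j' := ∃ lam ∈ cycleSpace s t, actW k lam j = j'
  iseqv := by
    constructor
    · intro j; exact ⟨0, zero_mem _, actW_zero k j⟩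
    · rintro j j' ⟨l, hl, rfl⟩
      exact ⟨l, hl, by rw [← actW_add, add_self_zmod2, actW_zero]⟩
    · rintro j j' j'' ⟨l, hl, rfl⟩ ⟨l', hl', rfl⟩
      exact ⟨l' + l, add_mem hl' hl, by rw [actW_add]⟩

lemma trivial_on_fixed_coboundary (s t : E → V) (k : ℕ) (j' : E → ℚ)
    (δ : (E → ZMod 2) → (E → ℚ) → ℂˣ)
    (hc : IsCocycle s t k j' δ)
    (hfix : ∀ lam ∈ cycleSpace s t, ∀ j ∈ QCG s t k j', actW k lam j = j → δ lam j = 1) :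
    IsCoboundary s t k j' δ := by
  classical
  set R : (E → ℚ) → (E → ℚ) := fun j => (Quotient.mk (orbSetoid s t k) j).out with hRdef
  have hrel : ∀ j : E → ℚ, ∃ lam ∈ cycleSpace s t, actW k lam (R j) = j := by
    intro j
    exact Quotient.exact (Quotient.out_eq (Quotient.mk (orbSetoid s t k) j))
  choose mu hmu1 hmu2 using hrel
  have hRQ : ∀ j ∈ QCG s t k j', R j ∈ QCG s t k j' := by
    intro j hj
    have hRj : R j = actW k (mu j) j := by
      have h1 := congrArg (actW k (mu j)) (hmu2 j)
      rw [← actW_add, add_self_zmod2, actW_zero] at h1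
      exact h1
    rw [hRj]; exact actW_mem_QCG s t k j' (mu j) (hmu1 j) j hj
  have hone : ∀ j ∈ QCG s t k j', δ 0 j = 1 := fun j hj =>
    hfix 0 (zero_mem _) j hj (actW_zero k j)
  have hwd : ∀ ν ∈ cycleSpace s t, ∀ ν' ∈ cycleSpace s t, ∀ j₀ ∈ QCG s t k j',
      actW k ν j₀ = actW k ν' j₀ → δ ν j₀ = δ ν' j₀ := by
    intro ν hν ν' hν' j₀ hj₀ heq
    have hinv : δ ν (actW k ν j₀) * δ ν j₀ = 1 := by
      have h := hc ν hν ν hν j₀ hj₀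
      rw [add_self_zmod2] at h
      rw [← h]; exact hone j₀ hj₀
    have hfix2 : actW k (ν + ν') j₀ = j₀ := by
      rw [actW_add, ← heq, ← actW_add, add_self_zmod2, actW_zero]
    have h1 := hc ν hν ν' hν' j₀ hj₀
    rw [← heq] at h1
    have h0 : δ (ν + ν') j₀ = 1 := hfix _ (add_mem hν hν') j₀ hj₀ hfix2
    have hval : δ ν (actW k ν j₀) = (δ ν j₀)⁻¹ := by
      rw [eq_inv_iff_mul_eq_one]; exact hinv
    rw [h0, hval] at h1
    exact (inv_mul_eq_one.mp h1.symm)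
  refine ⟨fun j => δ (mu j) (R j), ?_⟩
  intro lam hlam j hj
  have hRact : R (actW k lam j) = R j := by
    have hq : Quotient.mk (orbSetoid s t k) (actW k lam j)
        = Quotient.mk (orbSetoid s t k) j := by
      refine (Quotient.sound ?_).symm
      exact ⟨lam, hlam, rfl⟩
    simp only [hRdef, hq]
  have hj₀ : R j ∈ QCG s t k j' := hRQ j hj
  have h1 := hc lam hlam (mu j) (hmu1 j) (R j) hj₀
  rw [hmu2 j] at h1
  have h2 : actW k (lam + mu j) (R j) = actW k (mu (actW k lam j)) (R j) := by
    rw [actW_add, hmu2 j]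
    rw [show actW k (mu (actW k lam j)) (R j) = actW k lam j from by
      rw [← hRact]; exact hmu2 _]
  have h3 : δ (lam + mu j) (R j) = δ (mu (actW k lam j)) (R j) :=
    hwd _ (add_mem hlam (hmu1 j)) _ (hmu1 _) (R j) hj₀ h2
  show δ lam j = δ (mu (actW k lam j)) (R (actW k lam j)) * (δ (mu j) (R j))⁻¹
  rw [hRact, ← h3, h1, mul_inv_cancel_right]

/-- if `δ₁` and `δ₂` are two external edge cocycles (for the same `Γ`, `k`
and `j'`), then the pointwise quotient `δ₁ · δ₂⁻¹` is a coboundary; i.e. the external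
edge class is unique. -/
theorem external_edge_class_unique
    (s t : E → V) (k : ℕ) (j' : E → ℚ)
    (hut : Unitrivalent s t) (hk : 0 < k)
    (δ₁ δ₂ : (E → ZMod 2) → (E → ℚ) → ℂˣ)
    (h₁ : IsCocycle s t k j' δ₁) (h₂ : IsCocycle s t k j' δ₂)
    (he₁ : ExtCond s t k j' δ₁) (he₂ : ExtCond s t k j' δ₂) :
    IsCoboundary s t k j' (fun lam j => δ₁ lam j * (δ₂ lam j)⁻¹) := by
  apply trivial_on_fixed_coboundary
  · intro lam hlam lam' hlam' j hj
    show δ₁ (lam + lam') j * (δ₂ (lam + lam') j)⁻¹ = _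
    rw [h₁ lam hlam lam' hlam' j hj, h₂ lam hlam lam' hlam' j hj, mul_inv]
    exact mul_mul_mul_comm _ _ _ _
  · intro lam hlam j hj hfixj
    have heq : δ₁ lam j = δ₂ lam j :=
      Units.ext ((he₁ lam hlam j hj hfixj).trans (he₂ lam hlam j hj hfixj).symm)
    show δ₁ lam j * (δ₂ lam j)⁻¹ = 1
    rw [heq, mul_inv_cancel]
end
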